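/- One has Δ ∩ E = Δ ∩ F = E ∩ F, and this common intersection is a single orbit of G = SL(2,ℂ). Consequently X is the disjoint union of exactly five G-orbits: X ∖ (Δ ∪ E ∪ F), Δ ∖ (E ∪ F), E ∖ Δ, F ∖ Δ, and Δ ∩ E. -/
import Mathlib


open Matrix

/-- A point of `ℙ¹ × ℙ¹ × ℙ²` in homogeneous coordinates: `x, y` are nonzero vectors in `ℂ²`
(homogeneous coordinates on the two `ℙ¹`-factors) and `z` is a nonzero symmetric `2×2` complex
matrix (homogeneous coordinates `[z₀:z₁:z₂]` on `ℙ²`, the projectivized symmetric matrices,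
via `z = [[z₀,z₁],[z₁,z₂]]`). -/
structure ProjPoint where
  x : Fin 2 → ℂ
  y : Fin 2 → ℂ
  z : Matrix (Fin 2) (Fin 2) ℂ
  hx : x ≠ 0
  hy : y ≠ 0
  hz : z ≠ 0
  hzsymm : zᵀ = z

/-- Membership in the threefold `X`:
`x₀y₀z₂ + x₁y₁z₀ − x₀y₁z₁ − x₁y₀z₁ = 0`. -/
def onX (p : ProjPoint) : Prop :=
  p.x 0 * p.y 0 * p.z 1 1 + p.x 1 * p.y 1 * p.z 0 0
    - p.x 0 * p.y 1 * p.z 0 1 - p.x 1 * p.y 0 * p.z 0 1 = 0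

/-- Membership in `Δ = X ∩ {x₀y₁ − x₁y₀ = 0}`. -/
def memDelta (p : ProjPoint) : Prop := p.x 0 * p.y 1 - p.x 1 * p.y 0 = 0

/-- Membership in `E = X ∩ {x₁z₀ − x₀z₁ = 0, x₁z₁ − x₀z₂ = 0}`. -/
def memE (p : ProjPoint) : Prop :=
  p.x 1 * p.z 0 0 - p.x 0 * p.z 0 1 = 0 ∧ p.x 1 * p.z 0 1 - p.x 0 * p.z 1 1 = 0

/-- Membership in `F = X ∩ {y₁z₀ − y₀z₁ = 0, y₀z₂ − y₁z₁ = 0}`. -/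
def memF (p : ProjPoint) : Prop :=
  p.y 1 * p.z 0 0 - p.y 0 * p.z 0 1 = 0 ∧ p.y 0 * p.z 1 1 - p.y 1 * p.z 0 1 = 0

/-- Two points of `ℙ¹ × ℙ¹ × ℙ²` lie in the same orbit of the diagonal `SL(2,ℂ)`-action, where
`SL(2,ℂ)` acts standardly on each `ℙ¹`-factor and by `g·[M] := [g M gᵀ]` on `ℙ²`. -/
def sameOrbit (p q : ProjPoint) : Prop :=
  ∃ g : Matrix.SpecialLinearGroup (Fin 2) ℂ, ∃ a b c : ℂ,
    a ≠ 0 ∧ b ≠ 0 ∧ c ≠ 0 ∧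
    (g : Matrix (Fin 2) (Fin 2) ℂ) *ᵥ p.x = a • q.x ∧
    (g : Matrix (Fin 2) (Fin 2) ℂ) *ᵥ p.y = b • q.y ∧
    (g : Matrix (Fin 2) (Fin 2) ℂ) * p.z * (g : Matrix (Fin 2) (Fin 2) ℂ)ᵀ = c • q.z

/-- The five strata of `X`: the open stratum, `Δ ∖ (E ∪ F)`, `E ∖ Δ`, `F ∖ Δ` and `Δ ∩ E`. -/
def stratum : Fin 5 → ProjPoint → Prop :=
  ![fun p => ¬ memDelta p ∧ ¬ memE p ∧ ¬ memF p,
    fun p => memDelta p ∧ ¬ memE p ∧ ¬ memF p,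
    fun p => memE p ∧ ¬ memDelta p,
    fun p => memF p ∧ ¬ memDelta p,
    fun p => memDelta p ∧ memE p]

-- ==================== helpers ====================

lemma zsym (p : ProjPoint) : p.z 1 0 = p.z 0 1 := by
  have := congrFun (congrFun p.hzsymm 0) 1
  simpa using this

lemma vec_snd {v : Fin 2 → ℂ} (hv : v ≠ 0) (h0 : v 0 = 0) : v 1 ≠ 0 := by
  intro h1
  exact hv (funext fun i => by fin_cases i <;> simpa)

lemma vec_fst {v : Fin 2 → ℂ} (hv : v ≠ 0) (h1 : v 1 = 0) : v 0 ≠ 0 := by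
  intro h0
  exact hv (funext fun i => by fin_cases i <;> simpa)

lemma mat_ne (p : ProjPoint) (h00 : p.z 0 0 = 0) (h01 : p.z 0 1 = 0)
    (h10 : p.z 1 0 = 0) (h11 : p.z 1 1 = 0) : False := by
  exact p.hz (by ext i j; fin_cases i <;> fin_cases j <;> simpa)

lemma cancel {a t : ℂ} (ha : a ≠ 0) (h : a * t = 0) : t = 0 :=
  (mul_eq_zero.mp h).resolve_left ha

lemma orbit_elim {p q : ProjPoint} (h : sameOrbit p q) :
    ∃ g00 g01 g10 g11 a b c : ℂ,
      a ≠ 0 ∧ b ≠ 0 ∧ c ≠ 0 ∧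
      g00 * g11 - g01 * g10 = 1 ∧
      g00 * p.x 0 + g01 * p.x 1 = a * q.x 0 ∧
      g10 * p.x 0 + g11 * p.x 1 = a * q.x 1 ∧
      g00 * p.y 0 + g01 * p.y 1 = b * q.y 0 ∧
      g10 * p.y 0 + g11 * p.y 1 = b * q.y 1 ∧
      (g00 * p.z 0 0 + g01 * p.z 1 0) * g00 + (g00 * p.z 0 1 + g01 * p.z 1 1) * g01 = c * q.z 0 0 ∧
      (g00 * p.z 0 0 + g01 * p.z 1 0) * g10 + (g00 * p.z 0 1 + g01 * p.z 1 1) * g11 = c * q.z 0 1 ∧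
      (g10 * p.z 0 0 + g11 * p.z 1 0) * g10 + (g10 * p.z 0 1 + g11 * p.z 1 1) * g11 = c * q.z 1 1 := by
  obtain ⟨g, a, b, c, ha, hb, hc, hgx, hgy, hgz⟩ := h
  set G := (g : Matrix (Fin 2) (Fin 2) ℂ) with hG
  refine ⟨G 0 0, G 0 1, G 1 0, G 1 1, a, b, c, ha, hb, hc, ?_, ?_, ?_, ?_, ?_, ?_, ?_, ?_⟩
  · have := g.2
    rw [Matrix.det_fin_two] at this
    linear_combination this
  · have := congrFun hgx 0
    simp only [Matrix.mulVec, dotProduct, Fin.sum_univ_two, Pi.smul_apply,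
      smul_eq_mul] at this
    linear_combination this
  · have := congrFun hgx 1
    simp only [Matrix.mulVec, dotProduct, Fin.sum_univ_two, Pi.smul_apply,
      smul_eq_mul] at this
    linear_combination this
  · have := congrFun hgy 0
    simp only [Matrix.mulVec, dotProduct, Fin.sum_univ_two, Pi.smul_apply,
      smul_eq_mul] at this
    linear_combination this
  · have := congrFun hgy 1
    simp only [Matrix.mulVec, dotProduct, Fin.sum_univ_two, Pi.smul_apply,
      smul_eq_mul] at this
    linear_combination this
  · have := congrFun (congrFun hgz 0) 0
    simp only [Matrix.mul_apply, Matrix.transpose_apply, Fin.sum_univ_two,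
      Matrix.smul_apply, smul_eq_mul] at this
    linear_combination this
  · have := congrFun (congrFun hgz 0) 1
    simp only [Matrix.mul_apply, Matrix.transpose_apply, Fin.sum_univ_two,
      Matrix.smul_apply, smul_eq_mul] at this
    linear_combination this
  · have := congrFun (congrFun hgz 1) 1
    simp only [Matrix.mul_apply, Matrix.transpose_apply, Fin.sum_univ_two,
      Matrix.smul_apply, smul_eq_mul] at this
    linear_combination this

lemma orbit_mk (p q : ProjPoint) (m00 m01 m10 m11 a b c : ℂ)
    (hdet : m00 * m11 - m01 * m10 ≠ 0) (ha : a ≠ 0) (hb : b ≠ 0) (hc : c ≠ 0)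
    (hx0 : m00 * p.x 0 + m01 * p.x 1 = a * q.x 0)
    (hx1 : m10 * p.x 0 + m11 * p.x 1 = a * q.x 1)
    (hy0 : m00 * p.y 0 + m01 * p.y 1 = b * q.y 0)
    (hy1 : m10 * p.y 0 + m11 * p.y 1 = b * q.y 1)
    (hz00 : (m00 * p.z 0 0 + m01 * p.z 1 0) * m00 + (m00 * p.z 0 1 + m01 * p.z 1 1) * m01 = c * q.z 0 0)
    (hz01 : (m00 * p.z 0 0 + m01 * p.z 1 0) * m10 + (m00 * p.z 0 1 + m01 * p.z 1 1) * m11 = c * q.z 0 1)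
    (hz11 : (m10 * p.z 0 0 + m11 * p.z 1 0) * m10 + (m10 * p.z 0 1 + m11 * p.z 1 1) * m11 = c * q.z 1 1) :
    sameOrbit p q := by
  obtain ⟨s, hs⟩ := IsAlgClosed.exists_pow_nat_eq (k := ℂ) (m00 * m11 - m01 * m10) zero_lt_two
  have hsne : s ≠ 0 := by
    intro h
    rw [h] at hs
    exact hdet (by linear_combination -hs)
  have hMx : !![m00, m01; m10, m11] *ᵥ p.x = a • q.x := by
    funext i
    fin_cases i <;>
      simp only [Matrix.mulVec, dotProduct, Fin.sum_univ_two, Pi.smul_apply,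
        smul_eq_mul, Matrix.cons_val', Matrix.cons_val_zero, Matrix.cons_val_one,
        Matrix.head_cons, Matrix.empty_val', Matrix.cons_val_fin_one, Matrix.head_fin_const,
        Fin.mk_zero, Fin.mk_one, Matrix.of_apply, Matrix.cons_val_zero, Matrix.cons_val_one, Matrix.head_cons]
    · linear_combination hx0
    · linear_combination hx1
  have hMy : !![m00, m01; m10, m11] *ᵥ p.y = b • q.y := by
    funext i
    fin_cases i <;>
      simp only [Matrix.mulVec, dotProduct, Fin.sum_univ_two, Pi.smul_apply,
        smul_eq_mul, Matrix.cons_val', Matrix.cons_val_zero, Matrix.cons_val_one,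
        Matrix.head_cons, Matrix.empty_val', Matrix.cons_val_fin_one, Matrix.head_fin_const,
        Fin.mk_zero, Fin.mk_one, Matrix.of_apply, Matrix.cons_val_zero, Matrix.cons_val_one, Matrix.head_cons]
    · linear_combination hy0
    · linear_combination hy1
  have hMz : !![m00, m01; m10, m11] * p.z * (!![m00, m01; m10, m11])ᵀ = c • q.z := by
    ext i j
    fin_cases i <;> fin_cases j <;>
      simp only [Matrix.mul_apply, Matrix.transpose_apply, Fin.sum_univ_two,
        Matrix.smul_apply, smul_eq_mul, Matrix.cons_val', Matrix.cons_val_zero,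
        Matrix.cons_val_one, Matrix.head_cons, Matrix.empty_val',
        Matrix.cons_val_fin_one, Matrix.head_fin_const, Fin.mk_zero, Fin.mk_one, Matrix.of_apply, Matrix.cons_val_zero, Matrix.cons_val_one, Matrix.head_cons]
    · linear_combination hz00
    · linear_combination hz01
    · linear_combination hz01 + (m00 * m11 - m01 * m10) * zsym p - c * zsym q
    · linear_combination hz11
  refine ⟨⟨s⁻¹ • !![m00, m01; m10, m11], ?_⟩, s⁻¹ * a, s⁻¹ * b, s⁻¹ * s⁻¹ * c,
    by simp [hsne, ha], by simp [hsne, hb], by simp [hsne, hc], ?_, ?_, ?_⟩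
  · rw [Matrix.det_smul, Matrix.det_fin_two_of]
    simp only [Fintype.card_fin]
    rw [show m00 * m11 - m01 * m10 = s ^ 2 by rw [hs]]
    field_simp
  · show (s⁻¹ • !![m00, m01; m10, m11]) *ᵥ p.x = _
    rw [Matrix.smul_mulVec, hMx, smul_smul]
  · show (s⁻¹ • !![m00, m01; m10, m11]) *ᵥ p.y = _
    rw [Matrix.smul_mulVec, hMy, smul_smul]
  · show (s⁻¹ • !![m00, m01; m10, m11]) * p.z * (s⁻¹ • !![m00, m01; m10, m11])ᵀ = _
    rw [Matrix.transpose_smul, Matrix.smul_mul, Matrix.smul_mul, Matrix.mul_smul, hMz,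
      smul_smul, smul_smul, mul_assoc]

lemma conj_zero {m00 m01 m10 m11 z00 z01 z10 z11 : ℂ}
    (hd : m00 * m11 - m01 * m10 ≠ 0)
    (h00 : (m00 * z00 + m01 * z10) * m00 + (m00 * z01 + m01 * z11) * m01 = 0)
    (h01 : (m00 * z00 + m01 * z10) * m10 + (m00 * z01 + m01 * z11) * m11 = 0)
    (h10 : (m10 * z00 + m11 * z10) * m00 + (m10 * z01 + m11 * z11) * m01 = 0)
    (h11 : (m10 * z00 + m11 * z10) * m10 + (m10 * z01 + m11 * z11) * m11 = 0) :
    z00 = 0 ∧ z01 = 0 ∧ z10 = 0 ∧ z11 = 0 := by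
  have hd2 : (m00 * m11 - m01 * m10) ^ 2 ≠ 0 := pow_ne_zero _ hd
  refine ⟨cancel hd2 ?_, cancel hd2 ?_, cancel hd2 ?_, cancel hd2 ?_⟩
  · linear_combination m11 ^ 2 * h00 - m01 * m11 * h01 - m01 * m11 * h10 + m01 ^ 2 * h11
  · linear_combination (-m10 * m11) * h00 + m00 * m11 * h01 + m01 * m10 * h10 - m00 * m01 * h11
  · linear_combination (-m10 * m11) * h00 + m01 * m10 * h01 + m00 * m11 * h10 - m00 * m01 * h11
  · linear_combination m10 ^ 2 * h00 - m00 * m10 * h01 - m00 * m10 * h10 + m00 ^ 2 * h11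

-- ==================== invariance ====================

lemma delta_inv {p q : ProjPoint} (h : sameOrbit p q) (hd : memDelta p) : memDelta q := by
  obtain ⟨g00, g01, g10, g11, a, b, c, ha, hb, hc, hdet, hx0, hx1, hy0, hy1, hz00, hz01, hz11⟩ :=
    orbit_elim h
  unfold memDelta at *
  have key : (a * b) * (q.x 0 * q.y 1 - q.x 1 * q.y 0) = 0 := by
    linear_combination (g00 * g11 - g01 * g10) * hd - (g00 * p.x 0 + g01 * p.x 1) * hy1 -
      (b * q.y 1) * hx0 + (g10 * p.x 0 + g11 * p.x 1) * hy0 + (b * q.y 0) * hx1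
  exact cancel (mul_ne_zero ha hb) key

lemma E_inv {p q : ProjPoint} (h : sameOrbit p q) (hE : memE p) : memE q := by
  obtain ⟨g00, g01, g10, g11, a, b, c, ha, hb, hc, hdet, hx0, hx1, hy0, hy1, hz00, hz01, hz11⟩ :=
    orbit_elim h
  obtain ⟨hE1, hE2⟩ := hE
  have hsym := zsym p
  constructor
  · refine cancel (mul_ne_zero ha hc) ?_
    linear_combination (g00 * g11 - g01 * g10) * (g00 * hE1 + g01 * hE2 + g01 * p.x 1 * hsym) -
      (g10 * p.x 0 + g11 * p.x 1) * hz00 - (c * q.z 0 0) * hx1 +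
      (g00 * p.x 0 + g01 * p.x 1) * hz01 + (c * q.z 0 1) * hx0
  · refine cancel (mul_ne_zero ha hc) ?_
    linear_combination (g00 * g11 - g01 * g10) * (g10 * hE1 + g11 * hE2) -
      (g00 * g11 - g01 * g10) * g10 * p.x 0 * hsym -
      (g10 * p.x 0 + g11 * p.x 1) * hz01 - (c * q.z 0 1) * hx1 +
      (g00 * p.x 0 + g01 * p.x 1) * hz11 + (c * q.z 1 1) * hx0

lemma F_inv {p q : ProjPoint} (h : sameOrbit p q) (hF : memF p) : memF q := by
  obtain ⟨g00, g01, g10, g11, a, b, c, ha, hb, hc, hdet, hx0, hx1, hy0, hy1, hz00, hz01, hz11⟩ :=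
    orbit_elim h
  obtain ⟨hF1, hF2⟩ := hF
  have hsym := zsym p
  constructor
  · refine cancel (mul_ne_zero hb hc) ?_
    linear_combination (g00 * g11 - g01 * g10) * (g00 * hF1 - g01 * hF2) +
      (g00 * g11 - g01 * g10) * g01 * p.y 1 * hsym -
      (g10 * p.y 0 + g11 * p.y 1) * hz00 - (c * q.z 0 0) * hy1 +
      (g00 * p.y 0 + g01 * p.y 1) * hz01 + (c * q.z 0 1) * hy0
  · refine cancel (mul_ne_zero hb hc) ?_
    linear_combination (g00 * g11 - g01 * g10) * (g11 * hF2 - g10 * hF1) +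
      (g00 * g11 - g01 * g10) * g10 * p.y 0 * hsym -
      (g00 * p.y 0 + g01 * p.y 1) * hz11 - (c * q.z 1 1) * hy0 +
      (g10 * p.y 0 + g11 * p.y 1) * hz01 + (c * q.z 0 1) * hy1

lemma onX_inv {p q : ProjPoint} (h : sameOrbit p q) (hX : onX p) : onX q := by
  obtain ⟨g00, g01, g10, g11, a, b, c, ha, hb, hc, hdet, hx0, hx1, hy0, hy1, hz00, hz01, hz11⟩ :=
    orbit_elim h
  unfold onX at *
  have hsym := zsym p
  refine cancel (mul_ne_zero (mul_ne_zero ha hb) hc) ?_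
  linear_combination
    (g00 * g11 - g01 * g10) * (g00 * g11 - g01 * g10) * hX +
    (g00 * g11 - g01 * g10) * (g00 * g10 * p.x 0 * p.y 0 +
      g01 * g10 * (p.x 0 * p.y 1 + p.x 1 * p.y 0) + g01 * g11 * p.x 1 * p.y 1) * hsym -
    (g00 * p.x 0 + g01 * p.x 1) * (g00 * p.y 0 + g01 * p.y 1) * hz11 -
    (c * q.z 1 1) * (g00 * p.x 0 + g01 * p.x 1) * hy0 -
    (b * q.y 0) * (c * q.z 1 1) * hx0 -
    (g10 * p.x 0 + g11 * p.x 1) * (g10 * p.y 0 + g11 * p.y 1) * hz00 -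
    (c * q.z 0 0) * (g10 * p.x 0 + g11 * p.x 1) * hy1 -
    (b * q.y 1) * (c * q.z 0 0) * hx1 +
    (g00 * p.x 0 + g01 * p.x 1) * (g10 * p.y 0 + g11 * p.y 1) * hz01 +
    (c * q.z 0 1) * (g00 * p.x 0 + g01 * p.x 1) * hy1 +
    (b * q.y 1) * (c * q.z 0 1) * hx0 +
    (g10 * p.x 0 + g11 * p.x 1) * (g00 * p.y 0 + g01 * p.y 1) * hz01 +
    (c * q.z 0 1) * (g10 * p.x 0 + g11 * p.x 1) * hy0 +
    (b * q.y 0) * (c * q.z 0 1) * hx1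

-- ==================== symm / trans ====================

lemma sameOrbit_symm {p q : ProjPoint} (h : sameOrbit p q) : sameOrbit q p := by
  obtain ⟨g, a, b, c, ha, hb, hc, hgx, hgy, hgz⟩ := h
  have hmul : ((g⁻¹ : Matrix.SpecialLinearGroup (Fin 2) ℂ) : Matrix (Fin 2) (Fin 2) ℂ) *
      (g : Matrix (Fin 2) (Fin 2) ℂ) = 1 := by
    rw [← Matrix.SpecialLinearGroup.coe_mul, inv_mul_cancel, Matrix.SpecialLinearGroup.coe_one]
  refine ⟨g⁻¹, a⁻¹, b⁻¹, c⁻¹, inv_ne_zero ha, inv_ne_zero hb, inv_ne_zero hc, ?_, ?_, ?_⟩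
  · have h1 : ((g⁻¹ : Matrix.SpecialLinearGroup (Fin 2) ℂ) : Matrix (Fin 2) (Fin 2) ℂ) *ᵥ
        (a • q.x) = p.x := by
      rw [← hgx, Matrix.mulVec_mulVec, hmul, Matrix.one_mulVec]
    rw [Matrix.mulVec_smul] at h1
    rw [← h1, smul_smul, inv_mul_cancel₀ ha, one_smul]
  · have h1 : ((g⁻¹ : Matrix.SpecialLinearGroup (Fin 2) ℂ) : Matrix (Fin 2) (Fin 2) ℂ) *ᵥ
        (b • q.y) = p.y := by
      rw [← hgy, Matrix.mulVec_mulVec, hmul, Matrix.one_mulVec]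
    rw [Matrix.mulVec_smul] at h1
    rw [← h1, smul_smul, inv_mul_cancel₀ hb, one_smul]
  · have h2 : ((g⁻¹ : Matrix.SpecialLinearGroup (Fin 2) ℂ) : Matrix (Fin 2) (Fin 2) ℂ) *
        (c • q.z) * ((g⁻¹ : Matrix.SpecialLinearGroup (Fin 2) ℂ) : Matrix (Fin 2) (Fin 2) ℂ)ᵀ
        = p.z := by
      rw [← hgz]
      have e : ((g⁻¹ : Matrix.SpecialLinearGroup (Fin 2) ℂ) : Matrix (Fin 2) (Fin 2) ℂ) *
          ((g : Matrix (Fin 2) (Fin 2) ℂ) * p.z * (g : Matrix (Fin 2) (Fin 2) ℂ)ᵀ) *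
          ((g⁻¹ : Matrix.SpecialLinearGroup (Fin 2) ℂ) : Matrix (Fin 2) (Fin 2) ℂ)ᵀ =
          (((g⁻¹ : Matrix.SpecialLinearGroup (Fin 2) ℂ) : Matrix (Fin 2) (Fin 2) ℂ) *
            (g : Matrix (Fin 2) (Fin 2) ℂ)) * p.z *
          (((g⁻¹ : Matrix.SpecialLinearGroup (Fin 2) ℂ) : Matrix (Fin 2) (Fin 2) ℂ) *
            (g : Matrix (Fin 2) (Fin 2) ℂ))ᵀ := by
        rw [Matrix.transpose_mul]
        noncomm_ring
      rw [e, hmul]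
      simp
    have h3 : c • (((g⁻¹ : Matrix.SpecialLinearGroup (Fin 2) ℂ) : Matrix (Fin 2) (Fin 2) ℂ) *
        q.z * ((g⁻¹ : Matrix.SpecialLinearGroup (Fin 2) ℂ) : Matrix (Fin 2) (Fin 2) ℂ)ᵀ)
        = p.z := by
      rw [← h2, Matrix.mul_smul, Matrix.smul_mul]
    rw [← h3, smul_smul, inv_mul_cancel₀ hc, one_smul]

lemma sameOrbit_trans {p q r : ProjPoint} (h1 : sameOrbit p q) (h2 : sameOrbit q r) :
    sameOrbit p r := by
  obtain ⟨g, a, b, c, ha, hb, hc, hgx, hgy, hgz⟩ := h1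
  obtain ⟨g', a', b', c', ha', hb', hc', hgx', hgy', hgz'⟩ := h2
  refine ⟨g' * g, a * a', b * b', c * c', mul_ne_zero ha ha', mul_ne_zero hb hb',
    mul_ne_zero hc hc', ?_, ?_, ?_⟩
  · rw [Matrix.SpecialLinearGroup.coe_mul, ← Matrix.mulVec_mulVec, hgx, Matrix.mulVec_smul,
      hgx', smul_smul]
  · rw [Matrix.SpecialLinearGroup.coe_mul, ← Matrix.mulVec_mulVec, hgy, Matrix.mulVec_smul,
      hgy', smul_smul]
  · rw [Matrix.SpecialLinearGroup.coe_mul, Matrix.transpose_mul]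
    calc (g' : Matrix (Fin 2) (Fin 2) ℂ) * (g : Matrix (Fin 2) (Fin 2) ℂ) * p.z *
        ((g : Matrix (Fin 2) (Fin 2) ℂ)ᵀ * (g' : Matrix (Fin 2) (Fin 2) ℂ)ᵀ) =
        (g' : Matrix (Fin 2) (Fin 2) ℂ) * ((g : Matrix (Fin 2) (Fin 2) ℂ) * p.z *
          (g : Matrix (Fin 2) (Fin 2) ℂ)ᵀ) * (g' : Matrix (Fin 2) (Fin 2) ℂ)ᵀ := by
          noncomm_ring
    _ = (c * c') • r.z := by
        rw [hgz, Matrix.mul_smul, Matrix.smul_mul, hgz', smul_smul]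

-- ==================== intersection lemmas ====================

lemma DE_F {p : ProjPoint} (hD : memDelta p) (hE : memE p) : memF p := by
  obtain ⟨hE1, hE2⟩ := hE
  unfold memDelta at hD
  unfold memF
  by_cases h0 : p.x 0 = 0
  · have hx1 : p.x 1 ≠ 0 := vec_snd p.hx h0
    have hz00 : p.z 0 0 = 0 := cancel hx1 (by linear_combination hE1 + p.z 0 1 * h0)
    have hz01 : p.z 0 1 = 0 := cancel hx1 (by linear_combination hE2 + p.z 1 1 * h0)
    have hy0 : p.y 0 = 0 := cancel hx1 (by linear_combination -hD + p.y 1 * h0)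
    constructor
    · linear_combination p.y 1 * hz00 - p.z 0 1 * hy0
    · linear_combination p.z 1 1 * hy0 - p.y 1 * hz01
  · constructor
    · refine cancel h0 ?_
      linear_combination p.z 0 0 * hD + p.y 0 * hE1
    · refine cancel h0 ?_
      linear_combination (-p.y 0) * hE2 - p.z 0 1 * hD

lemma DF_E {p : ProjPoint} (hD : memDelta p) (hF : memF p) : memE p := by
  obtain ⟨hF1, hF2⟩ := hF
  unfold memDelta at hD
  unfold memE
  by_cases h0 : p.y 0 = 0
  · have hy1 : p.y 1 ≠ 0 := vec_snd p.hy h0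
    have hz00 : p.z 0 0 = 0 := cancel hy1 (by linear_combination hF1 + p.z 0 1 * h0)
    have hz01 : p.z 0 1 = 0 := cancel hy1 (by linear_combination -hF2 + p.z 1 1 * h0)
    have hx0 : p.x 0 = 0 := cancel hy1 (by
      have : p.y 1 * p.x 0 = 0 := by linear_combination hD + p.x 1 * h0
      linear_combination this)
    constructor
    · linear_combination p.x 1 * hz00 - p.z 0 1 * hx0
    · linear_combination p.x 1 * hz01 - p.z 1 1 * hx0
  · constructor
    · refine cancel h0 ?_
      linear_combination (-p.z 0 0) * hD + p.x 0 * hF1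
    · refine cancel h0 ?_
      linear_combination (-p.z 0 1) * hD - p.x 0 * hF2

lemma EF_D {p : ProjPoint} (hE : memE p) (hF : memF p) : memDelta p := by
  obtain ⟨hE1, hE2⟩ := hE
  obtain ⟨hF1, hF2⟩ := hF
  by_contra hd
  unfold memDelta at hd
  have h00 : p.z 0 0 = 0 := cancel hd (by linear_combination p.x 0 * hF1 - p.y 0 * hE1)
  have h01 : p.z 0 1 = 0 := cancel hd (by linear_combination p.x 1 * hF1 - p.y 1 * hE1)
  have h11 : p.z 1 1 = 0 := cancel hd (by linear_combination (-p.x 1) * hF2 - p.y 1 * hE2)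
  exact mat_ne p h00 h01 ((zsym p).trans h01) h11

-- ==================== representatives ====================

noncomputable def rep0 : ProjPoint :=
  { x := ![1, 0], y := ![0, 1], z := !![1, 0; 0, 1],
    hx := fun h => by have := congrFun h 0; norm_num at this
    hy := fun h => by have := congrFun h 1; norm_num at this
    hz := fun h => by have := congrFun (congrFun h 0) 0; norm_num at this
    hzsymm := by ext i j; fin_cases i <;> fin_cases j <;> rfl }

noncomputable def rep1 : ProjPoint :=
  { x := ![1, 0], y := ![1, 0], z := !![0, 1; 1, 0],
    hx := fun h => by have := congrFun h 0; norm_num at this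
    hy := fun h => by have := congrFun h 0; norm_num at this
    hz := fun h => by have := congrFun (congrFun h 0) 1; norm_num at this
    hzsymm := by ext i j; fin_cases i <;> fin_cases j <;> rfl }

noncomputable def rep2 : ProjPoint :=
  { x := ![1, 0], y := ![0, 1], z := !![1, 0; 0, 0],
    hx := fun h => by have := congrFun h 0; norm_num at this
    hy := fun h => by have := congrFun h 1; norm_num at this
    hz := fun h => by have := congrFun (congrFun h 0) 0; norm_num at this
    hzsymm := by ext i j; fin_cases i <;> fin_cases j <;> rfl }

noncomputable def rep3 : ProjPoint :=
  { x := ![1, 0], y := ![0, 1], z := !![0, 0; 0, 1],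
    hx := fun h => by have := congrFun h 0; norm_num at this
    hy := fun h => by have := congrFun h 1; norm_num at this
    hz := fun h => by have := congrFun (congrFun h 1) 1; norm_num at this
    hzsymm := by ext i j; fin_cases i <;> fin_cases j <;> rfl }

noncomputable def rep4 : ProjPoint :=
  { x := ![1, 0], y := ![1, 0], z := !![1, 0; 0, 0],
    hx := fun h => by have := congrFun h 0; norm_num at this
    hy := fun h => by have := congrFun h 0; norm_num at this
    hz := fun h => by have := congrFun (congrFun h 0) 0; norm_num at this
    hzsymm := by ext i j; fin_cases i <;> fin_cases j <;> rfl }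

lemma conj_dot_ne {v : Fin 2 → ℂ} (hv : v ≠ 0) :
    (starRingEnd ℂ) (v 0) * v 0 + (starRingEnd ℂ) (v 1) * v 1 ≠ 0 := by
  intro h
  rw [mul_comm, Complex.mul_conj, mul_comm ((starRingEnd ℂ) (v 1)), Complex.mul_conj,
    ← Complex.ofReal_add, Complex.ofReal_eq_zero] at h
  have h0 : Complex.normSq (v 0) = 0 ∧ Complex.normSq (v 1) = 0 :=
    (add_eq_zero_iff_of_nonneg (Complex.normSq_nonneg _) (Complex.normSq_nonneg _)).mp h
  exact hv (funext fun i => by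
    fin_cases i
    · simpa using Complex.normSq_eq_zero.mp h0.1
    · simpa using Complex.normSq_eq_zero.mp h0.2)

-- ==================== reduction to rep4 ====================

lemma toRep4 {p : ProjPoint} (hD : memDelta p) (hE : memE p) : sameOrbit p rep4 := by
  obtain ⟨hE1, hE2⟩ := hE
  unfold memDelta at hD
  have hsym := zsym p
  set cx0 := (starRingEnd ℂ) (p.x 0) with hcx0
  set cx1 := (starRingEnd ℂ) (p.x 1) with hcx1
  have hn : cx0 * p.x 0 + cx1 * p.x 1 ≠ 0 := conj_dot_ne p.hx
  have hdet : cx0 * (-p.x 0) - cx1 * p.x 1 ≠ 0 := by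
    intro h
    exact hn (by linear_combination -h)
  have hw : cx0 * p.y 0 + cx1 * p.y 1 ≠ 0 := by
    intro h
    have hy1 : p.y 1 = 0 := cancel hn (by linear_combination cx0 * hD + p.x 1 * h)
    have hy0 : p.y 0 = 0 := cancel hn (by linear_combination (-cx1) * hD + p.x 0 * h)
    exact p.hy (funext fun i => by fin_cases i <;> assumption)
  have hE01 : (cx0 * p.z 0 0 + cx1 * p.z 1 0) * p.x 1 + (cx0 * p.z 0 1 + cx1 * p.z 1 1) * (-p.x 0)
      = 0 := by
    linear_combination cx0 * hE1 + cx1 * hE2 + cx1 * p.x 1 * hsym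
  have hE10 : (p.x 1 * p.z 0 0 + (-p.x 0) * p.z 1 0) * cx0 +
      (p.x 1 * p.z 0 1 + (-p.x 0) * p.z 1 1) * cx1 = 0 := by
    linear_combination cx0 * hE1 - cx0 * p.x 0 * hsym + cx1 * hE2
  have hE11 : (p.x 1 * p.z 0 0 + (-p.x 0) * p.z 1 0) * p.x 1 +
      (p.x 1 * p.z 0 1 + (-p.x 0) * p.z 1 1) * (-p.x 0) = 0 := by
    linear_combination p.x 1 * hE1 - p.x 1 * p.x 0 * hsym - p.x 0 * hE2
  have hc : (cx0 * p.z 0 0 + cx1 * p.z 1 0) * cx0 + (cx0 * p.z 0 1 + cx1 * p.z 1 1) * cx1 ≠ 0 := by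
    intro h
    obtain ⟨h1, h2, h3, h4⟩ := conj_zero hdet h hE01 hE10 hE11
    exact mat_ne p h1 h2 h3 h4
  refine orbit_mk p rep4 cx0 cx1 (p.x 1) (-p.x 0) (cx0 * p.x 0 + cx1 * p.x 1)
    (cx0 * p.y 0 + cx1 * p.y 1)
    ((cx0 * p.z 0 0 + cx1 * p.z 1 0) * cx0 + (cx0 * p.z 0 1 + cx1 * p.z 1 1) * cx1)
    hdet hn hw hc ?_ ?_ ?_ ?_ ?_ ?_ ?_ <;>
    simp only [rep4, Matrix.cons_val_zero, Matrix.cons_val_one, Matrix.head_cons,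
      Matrix.of_apply]
  · ring
  · ring
  · ring
  · linear_combination -hD
  · ring
  · linear_combination hE01
  · linear_combination hE11

-- ==================== reduction to rep2 / rep3 ====================

lemma toRep2 {p : ProjPoint} (hE : memE p) (hnD : ¬ memDelta p) : sameOrbit p rep2 := by
  obtain ⟨hE1, hE2⟩ := hE
  have hd : p.x 0 * p.y 1 - p.x 1 * p.y 0 ≠ 0 := hnD
  have hsym := zsym p
  have hdet : p.y 1 * p.x 0 - (-p.y 0) * (-p.x 1) ≠ 0 := by
    intro h; exact hd (by linear_combination h)
  have hE01 : (p.y 1 * p.z 0 0 + (-p.y 0) * p.z 1 0) * (-p.x 1) +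
      (p.y 1 * p.z 0 1 + (-p.y 0) * p.z 1 1) * p.x 0 = 0 := by
    linear_combination (-p.y 1) * hE1 + p.y 0 * hE2 + p.y 0 * p.x 1 * hsym
  have hE10 : ((-p.x 1) * p.z 0 0 + p.x 0 * p.z 1 0) * p.y 1 +
      ((-p.x 1) * p.z 0 1 + p.x 0 * p.z 1 1) * (-p.y 0) = 0 := by
    linear_combination (-p.y 1) * hE1 + p.y 1 * p.x 0 * hsym + p.y 0 * hE2
  have hE11 : ((-p.x 1) * p.z 0 0 + p.x 0 * p.z 1 0) * (-p.x 1) +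
      ((-p.x 1) * p.z 0 1 + p.x 0 * p.z 1 1) * p.x 0 = 0 := by
    linear_combination p.x 1 * hE1 - p.x 1 * p.x 0 * hsym - p.x 0 * hE2
  have hc : (p.y 1 * p.z 0 0 + (-p.y 0) * p.z 1 0) * p.y 1 +
      (p.y 1 * p.z 0 1 + (-p.y 0) * p.z 1 1) * (-p.y 0) ≠ 0 := by
    intro h
    obtain ⟨h1, h2, h3, h4⟩ := conj_zero hdet h hE01 hE10 hE11
    exact mat_ne p h1 h2 h3 h4
  refine orbit_mk p rep2 (p.y 1) (-p.y 0) (-p.x 1) (p.x 0)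
    (p.x 0 * p.y 1 - p.x 1 * p.y 0) (p.x 0 * p.y 1 - p.x 1 * p.y 0)
    ((p.y 1 * p.z 0 0 + (-p.y 0) * p.z 1 0) * p.y 1 +
      (p.y 1 * p.z 0 1 + (-p.y 0) * p.z 1 1) * (-p.y 0))
    hdet hd hd hc ?_ ?_ ?_ ?_ ?_ ?_ ?_ <;>
    simp only [rep2, Matrix.cons_val_zero, Matrix.cons_val_one, Matrix.head_cons,
      Matrix.of_apply]
  · ring
  · ring
  · ring
  · ring
  · ring
  · linear_combination hE01
  · linear_combination hE11

lemma toRep3 {p : ProjPoint} (hF : memF p) (hnD : ¬ memDelta p) : sameOrbit p rep3 := by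
  obtain ⟨hF1, hF2⟩ := hF
  have hd : p.x 0 * p.y 1 - p.x 1 * p.y 0 ≠ 0 := hnD
  have hsym := zsym p
  have hdet : p.y 1 * p.x 0 - (-p.y 0) * (-p.x 1) ≠ 0 := by
    intro h; exact hd (by linear_combination h)
  have hE00 : (p.y 1 * p.z 0 0 + (-p.y 0) * p.z 1 0) * p.y 1 +
      (p.y 1 * p.z 0 1 + (-p.y 0) * p.z 1 1) * (-p.y 0) = 0 := by
    linear_combination p.y 1 * hF1 - p.y 1 * p.y 0 * hsym + p.y 0 * hF2
  have hE01 : (p.y 1 * p.z 0 0 + (-p.y 0) * p.z 1 0) * (-p.x 1) +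
      (p.y 1 * p.z 0 1 + (-p.y 0) * p.z 1 1) * p.x 0 = 0 := by
    linear_combination (-p.x 1) * hF1 + p.x 1 * p.y 0 * hsym - p.x 0 * hF2
  have hE10 : ((-p.x 1) * p.z 0 0 + p.x 0 * p.z 1 0) * p.y 1 +
      ((-p.x 1) * p.z 0 1 + p.x 0 * p.z 1 1) * (-p.y 0) = 0 := by
    linear_combination (-p.x 1) * hF1 + p.x 0 * p.y 1 * hsym - p.x 0 * hF2
  have hc : ((-p.x 1) * p.z 0 0 + p.x 0 * p.z 1 0) * (-p.x 1) +
      ((-p.x 1) * p.z 0 1 + p.x 0 * p.z 1 1) * p.x 0 ≠ 0 := by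
    intro h
    obtain ⟨h1, h2, h3, h4⟩ := conj_zero hdet hE00 hE01 hE10 h
    exact mat_ne p h1 h2 h3 h4
  refine orbit_mk p rep3 (p.y 1) (-p.y 0) (-p.x 1) (p.x 0)
    (p.x 0 * p.y 1 - p.x 1 * p.y 0) (p.x 0 * p.y 1 - p.x 1 * p.y 0)
    (((-p.x 1) * p.z 0 0 + p.x 0 * p.z 1 0) * (-p.x 1) +
      ((-p.x 1) * p.z 0 1 + p.x 0 * p.z 1 1) * p.x 0)
    hdet hd hd hc ?_ ?_ ?_ ?_ ?_ ?_ ?_ <;>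
    simp only [rep3, Matrix.cons_val_zero, Matrix.cons_val_one, Matrix.head_cons,
      Matrix.of_apply]
  · ring
  · ring
  · ring
  · ring
  · linear_combination hE00
  · linear_combination hE01
  · ring

-- ==================== reduction to rep1 ====================

lemma toRep1 {p : ProjPoint} (hX : onX p) (hD : memDelta p) (hnE : ¬ memE p) :
    sameOrbit p rep1 := by
  unfold memDelta at hD
  have hsym := zsym p
  set cx0 := (starRingEnd ℂ) (p.x 0) with hcx0
  set cx1 := (starRingEnd ℂ) (p.x 1) with hcx1
  have hn : cx0 * p.x 0 + cx1 * p.x 1 ≠ 0 := conj_dot_ne p.hx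
  have hdet : cx0 * (-p.x 0) - cx1 * p.x 1 ≠ 0 := by
    intro h; exact hn (by linear_combination -h)
  have hw : cx0 * p.y 0 + cx1 * p.y 1 ≠ 0 := by
    intro h
    have hy1 : p.y 1 = 0 := cancel hn (by linear_combination cx0 * hD + p.x 1 * h)
    have hy0 : p.y 0 = 0 := cancel hn (by linear_combination (-cx1) * hD + p.x 0 * h)
    exact p.hy (funext fun i => by fin_cases i <;> assumption)
  set E00 := (cx0 * p.z 0 0 + cx1 * p.z 1 0) * cx0 + (cx0 * p.z 0 1 + cx1 * p.z 1 1) * cx1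
    with hE00d
  set E01 := (cx0 * p.z 0 0 + cx1 * p.z 1 0) * p.x 1 +
    (cx0 * p.z 0 1 + cx1 * p.z 1 1) * (-p.x 0) with hE01d
  set E11 := (p.x 1 * p.z 0 0 + (-p.x 0) * p.z 1 0) * p.x 1 +
    (p.x 1 * p.z 0 1 + (-p.x 0) * p.z 1 1) * (-p.x 0) with hE11d
  have hE10e : (p.x 1 * p.z 0 0 + (-p.x 0) * p.z 1 0) * cx0 +
      (p.x 1 * p.z 0 1 + (-p.x 0) * p.z 1 1) * cx1 = E01 := by
    rw [hE01d]
    linear_combination (cx0 * (-p.x 0) - cx1 * p.x 1) * hsym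
  have hZne : (!![E00, E01; E01, E11] : Matrix (Fin 2) (Fin 2) ℂ) ≠ 0 := by
    intro h
    have h00 : E00 = 0 := by have := congrFun (congrFun h 0) 0; simpa using this
    have h01 : E01 = 0 := by have := congrFun (congrFun h 0) 1; simpa using this
    have h11 : E11 = 0 := by have := congrFun (congrFun h 1) 1; simpa using this
    obtain ⟨h1, h2, h3, h4⟩ := conj_zero hdet h00 h01 (hE10e.trans h01) h11
    exact mat_ne p h1 h2 h3 h4
  obtain ⟨q1, hq1x, hq1y, hq1z⟩ : ∃ q1 : ProjPoint, q1.x = ![1, 0] ∧ q1.y = ![1, 0] ∧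
      q1.z = !![E00, E01; E01, E11] :=
    ⟨{ x := ![1, 0], y := ![1, 0], z := !![E00, E01; E01, E11],
       hx := fun h => by have := congrFun h 0; norm_num at this
       hy := fun h => by have := congrFun h 0; norm_num at this
       hz := hZne
       hzsymm := by ext i j; fin_cases i <;> fin_cases j <;> rfl }, rfl, rfl, rfl⟩
  have step1 : sameOrbit p q1 := by
    refine orbit_mk p q1 cx0 cx1 (p.x 1) (-p.x 0) (cx0 * p.x 0 + cx1 * p.x 1)
      (cx0 * p.y 0 + cx1 * p.y 1) 1 hdet hn hw one_ne_zero ?_ ?_ ?_ ?_ ?_ ?_ ?_ <;>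
      simp only [hq1x, hq1y, hq1z, Matrix.of_apply, Matrix.cons_val_zero, Matrix.cons_val_one,
        Matrix.head_cons]
    · ring
    · ring
    · ring
    · linear_combination -hD
    · ring
    · ring
    · ring
  have hZ11 : E11 = 0 := by
    have h := onX_inv step1 hX
    unfold onX at h
    rw [hq1x, hq1y, hq1z] at h
    simp only [Matrix.cons_val_zero, Matrix.cons_val_one, Matrix.head_cons,
      Matrix.of_apply] at h
    linear_combination h
  have h01ne : E01 ≠ 0 := by
    intro h
    refine hnE (E_inv (sameOrbit_symm step1) ⟨?_, ?_⟩) <;>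
      rw [hq1x, hq1z] <;>
      simp only [Matrix.cons_val_zero, Matrix.cons_val_one, Matrix.head_cons, Matrix.of_apply]
    · linear_combination -h
    · linear_combination -hZ11
  have step2 : sameOrbit q1 rep1 := by
    have hdet2 : 2 * E01 * 1 - (-E00) * 0 ≠ 0 := by
      simpa using mul_ne_zero two_ne_zero h01ne
    have hc2 : 2 * E01 * E01 ≠ 0 := mul_ne_zero (mul_ne_zero two_ne_zero h01ne) h01ne
    refine orbit_mk q1 rep1 (2 * E01) (-E00) 0 1 (2 * E01) (2 * E01) (2 * E01 * E01)
      hdet2 (mul_ne_zero two_ne_zero h01ne) (mul_ne_zero two_ne_zero h01ne) hc2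
      ?_ ?_ ?_ ?_ ?_ ?_ ?_ <;>
      simp only [hq1x, hq1y, hq1z, rep1, Matrix.of_apply, Matrix.cons_val_zero,
        Matrix.cons_val_one, Matrix.head_cons]
    · ring
    · ring
    · ring
    · ring
    · linear_combination (E00 * E00) * hZ11
    · linear_combination (-E00) * hZ11
    · linear_combination hZ11
  exact sameOrbit_trans step1 step2

-- ==================== reduction to rep0 ====================

lemma toRep0 {p : ProjPoint} (hX : onX p) (hnD : ¬ memDelta p) (hnE : ¬ memE p)
    (hnF : ¬ memF p) : sameOrbit p rep0 := by
  have hd : p.x 0 * p.y 1 - p.x 1 * p.y 0 ≠ 0 := hnD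
  have hsym := zsym p
  have hdet : p.y 1 * p.x 0 - (-p.y 0) * (-p.x 1) ≠ 0 := by
    intro h; exact hd (by linear_combination h)
  set E00 := (p.y 1 * p.z 0 0 + (-p.y 0) * p.z 1 0) * p.y 1 +
    (p.y 1 * p.z 0 1 + (-p.y 0) * p.z 1 1) * (-p.y 0) with hE00d
  set E01 := (p.y 1 * p.z 0 0 + (-p.y 0) * p.z 1 0) * (-p.x 1) +
    (p.y 1 * p.z 0 1 + (-p.y 0) * p.z 1 1) * p.x 0 with hE01d
  set E11 := ((-p.x 1) * p.z 0 0 + p.x 0 * p.z 1 0) * (-p.x 1) +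
    ((-p.x 1) * p.z 0 1 + p.x 0 * p.z 1 1) * p.x 0 with hE11d
  have hE10e : ((-p.x 1) * p.z 0 0 + p.x 0 * p.z 1 0) * p.y 1 +
      ((-p.x 1) * p.z 0 1 + p.x 0 * p.z 1 1) * (-p.y 0) = E01 := by
    rw [hE01d]
    linear_combination (p.y 1 * p.x 0 - (-p.y 0) * (-p.x 1)) * hsym
  have hZne : (!![E00, E01; E01, E11] : Matrix (Fin 2) (Fin 2) ℂ) ≠ 0 := by
    intro h
    have h00 : E00 = 0 := by have := congrFun (congrFun h 0) 0; simpa using this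
    have h01 : E01 = 0 := by have := congrFun (congrFun h 0) 1; simpa using this
    have h11 : E11 = 0 := by have := congrFun (congrFun h 1) 1; simpa using this
    obtain ⟨h1, h2, h3, h4⟩ := conj_zero hdet h00 h01 (hE10e.trans h01) h11
    exact mat_ne p h1 h2 h3 h4
  obtain ⟨q1, hq1x, hq1y, hq1z⟩ : ∃ q1 : ProjPoint, q1.x = ![1, 0] ∧ q1.y = ![0, 1] ∧
      q1.z = !![E00, E01; E01, E11] :=
    ⟨{ x := ![1, 0], y := ![0, 1], z := !![E00, E01; E01, E11],
       hx := fun h => by have := congrFun h 0; norm_num at this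
       hy := fun h => by have := congrFun h 1; norm_num at this
       hz := hZne
       hzsymm := by ext i j; fin_cases i <;> fin_cases j <;> rfl }, rfl, rfl, rfl⟩
  have step1 : sameOrbit p q1 := by
    refine orbit_mk p q1 (p.y 1) (-p.y 0) (-p.x 1) (p.x 0)
      (p.x 0 * p.y 1 - p.x 1 * p.y 0) (p.x 0 * p.y 1 - p.x 1 * p.y 0) 1
      hdet hd hd one_ne_zero ?_ ?_ ?_ ?_ ?_ ?_ ?_ <;>
      simp only [hq1x, hq1y, hq1z, Matrix.of_apply, Matrix.cons_val_zero, Matrix.cons_val_one,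
        Matrix.head_cons]
    · ring
    · ring
    · ring
    · ring
    · ring
    · ring
    · ring
  have hZ01 : E01 = 0 := by
    have h := onX_inv step1 hX
    unfold onX at h
    rw [hq1x, hq1y, hq1z] at h
    simp only [Matrix.cons_val_zero, Matrix.cons_val_one, Matrix.head_cons,
      Matrix.of_apply] at h
    linear_combination -h
  have h11ne : E11 ≠ 0 := by
    intro h
    refine hnE (E_inv (sameOrbit_symm step1) ⟨?_, ?_⟩) <;>
      rw [hq1x, hq1z] <;>
      simp only [Matrix.cons_val_zero, Matrix.cons_val_one, Matrix.head_cons, Matrix.of_apply]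
    · linear_combination -hZ01
    · linear_combination -h
  have h00ne : E00 ≠ 0 := by
    intro h
    refine hnF (F_inv (sameOrbit_symm step1) ⟨?_, ?_⟩) <;>
      rw [hq1y, hq1z] <;>
      simp only [Matrix.cons_val_zero, Matrix.cons_val_one, Matrix.head_cons, Matrix.of_apply]
    · linear_combination h
    · linear_combination -hZ01
  obtain ⟨t, ht⟩ := IsAlgClosed.exists_pow_nat_eq (k := ℂ) E11 zero_lt_two
  obtain ⟨s, hs⟩ := IsAlgClosed.exists_pow_nat_eq (k := ℂ) E00 zero_lt_two
  have htne : t ≠ 0 := by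
    intro h; rw [h] at ht; exact h11ne (by linear_combination -ht)
  have hsne : s ≠ 0 := by
    intro h; rw [h] at hs; exact h00ne (by linear_combination -hs)
  have step2 : sameOrbit q1 rep0 := by
    have hdet2 : t * s - 0 * 0 ≠ 0 := by simpa using mul_ne_zero htne hsne
    refine orbit_mk q1 rep0 t 0 0 s t s (E00 * E11) hdet2 htne hsne
      (mul_ne_zero h00ne h11ne) ?_ ?_ ?_ ?_ ?_ ?_ ?_ <;>
      simp only [hq1x, hq1y, hq1z, rep0, Matrix.of_apply, Matrix.cons_val_zero,
        Matrix.cons_val_one, Matrix.head_cons]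
    · ring
    · ring
    · ring
    · ring
    · linear_combination E00 * ht
    · linear_combination t * s * hZ01
    · linear_combination E11 * hs
  exact sameOrbit_trans step1 step2

lemma classify (p : ProjPoint) (hXp : onX p) : ∃! i : Fin 5, stratum i p := by
  by_cases hD : memDelta p
  · by_cases hE : memE p
    · refine ⟨4, ⟨hD, hE⟩, ?_⟩
      intro j hj
      fin_cases j
      · exact absurd hD hj.1
      · exact absurd hE hj.2.1
      · exact absurd hD hj.2
      · exact absurd hD hj.2
      · rfl
    · have hF : ¬ memF p := fun hF => hE (DF_E hD hF)
      refine ⟨1, ⟨hD, hE, hF⟩, ?_⟩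
      intro j hj
      fin_cases j
      · exact absurd hD hj.1
      · rfl
      · exact absurd hj.1 hE
      · exact absurd hj.1 hF
      · exact absurd hj.2 hE
  · by_cases hE : memE p
    · refine ⟨2, ⟨hE, hD⟩, ?_⟩
      intro j hj
      fin_cases j
      · exact absurd hE hj.2.1
      · exact absurd hj.1 hD
      · rfl
      · exact absurd (EF_D hE hj.1) hD
      · exact absurd hj.1 hD
    · by_cases hF : memF p
      · refine ⟨3, ⟨hF, hD⟩, ?_⟩
        intro j hj
        fin_cases j
        · exact absurd hF hj.2.2
        · exact absurd hj.1 hD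
        · exact absurd hj.1 hE
        · rfl
        · exact absurd hj.1 hD
      · refine ⟨0, ⟨hD, hE, hF⟩, ?_⟩
        intro j hj
        fin_cases j
        · rfl
        · exact absurd hj.1 hD
        · exact absurd hj.1 hE
        · exact absurd hj.1 hF
        · exact absurd hj.2 hE

/-- **Statement 15.** On `X` one has `Δ ∩ E = Δ ∩ F = E ∩ F`, and this common intersection is a
single orbit of `G = SL(2,ℂ)`.  Consequently `X` is the disjoint union of exactly five
`G`-orbits: `X ∖ (Δ ∪ E ∪ F)`, `Δ ∖ (E ∪ F)`, `E ∖ Δ`, `F ∖ Δ` and `Δ ∩ E`; that is, every point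
of `X` lies in exactly one of the five strata, and two points of `X` lie in the same `G`-orbit
precisely when they lie in the same stratum. -/
theorem five_orbits :
    (∀ p : ProjPoint, onX p →
      ((memDelta p ∧ memE p ↔ memDelta p ∧ memF p) ∧
        (memDelta p ∧ memE p ↔ memE p ∧ memF p))) ∧
    (∀ p q : ProjPoint, onX p → onX q → memDelta p ∧ memE p → memDelta q ∧ memE q →
      sameOrbit p q) ∧
    (∀ p : ProjPoint, onX p → ∃! i : Fin 5, stratum i p) ∧
    (∀ p q : ProjPoint, onX p → onX q →
      (sameOrbit p q ↔ ∀ i : Fin 5, (stratum i p ↔ stratum i q))) := by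
  refine ⟨?_, ?_, classify, ?_⟩
  · intro p _
    exact ⟨⟨fun h => ⟨h.1, DE_F h.1 h.2⟩, fun h => ⟨h.1, DF_E h.1 h.2⟩⟩,
           ⟨fun h => ⟨h.2, DE_F h.1 h.2⟩, fun h => ⟨EF_D h.1 h.2, h.1⟩⟩⟩
  · intro p q _ _ hp hq
    exact sameOrbit_trans (toRep4 hp.1 hp.2) (sameOrbit_symm (toRep4 hq.1 hq.2))
  · intro p q hXp hXq
    constructor
    · intro h i
      have h' := sameOrbit_symm h
      have hD : memDelta p ↔ memDelta q := ⟨delta_inv h, delta_inv h'⟩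
      have hE : memE p ↔ memE q := ⟨E_inv h, E_inv h'⟩
      have hF : memF p ↔ memF q := ⟨F_inv h, F_inv h'⟩
      fin_cases i
      · exact and_congr (not_congr hD) (and_congr (not_congr hE) (not_congr hF))
      · exact and_congr hD (and_congr (not_congr hE) (not_congr hF))
      · exact and_congr hE (not_congr hD)
      · exact and_congr hF (not_congr hD)
      · exact and_congr hD hE
    · intro hiff
      obtain ⟨i, hi, _⟩ := classify p hXp
      have hiq : stratum i q := (hiff i).mp hi
      fin_cases i
      · exact sameOrbit_trans (toRep0 hXp hi.1 hi.2.1 hi.2.2)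
          (sameOrbit_symm (toRep0 hXq hiq.1 hiq.2.1 hiq.2.2))
      · exact sameOrbit_trans (toRep1 hXp hi.1 hi.2.1)
          (sameOrbit_symm (toRep1 hXq hiq.1 hiq.2.1))
      · exact sameOrbit_trans (toRep2 hi.1 hi.2) (sameOrbit_symm (toRep2 hiq.1 hiq.2))
      · exact sameOrbit_trans (toRep3 hi.1 hi.2) (sameOrbit_symm (toRep3 hiq.1 hiq.2))
      · exact sameOrbit_trans (toRep4 hi.1 hi.2) (sameOrbit_symm (toRep4 hiq.1 hiq.2))
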